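/- Let t be a positive integer. For every ε > 0 there exists N such that for all n ≥ N, every graph G on n vertices containing no subgraph isomorphic to B_t satisfies N(C_4, G) + ε·n² ≥ (1/2)·C(t,2)·( Σ_{u ∈ V(G)} d(u)² − 2(4t−1)·e(G) − (t−1)·n² ), where C(t,2) is the binomial coefficient t choose 2. -/

import Mathlib

/-!
Write `d(Q)` for the codegree of a pair `Q`, and call `Q` heavy if `d(Q) ≥ 2t + 2` and light
otherwise. Double counting gives `∑ d(z)² = 2 ∑_Q d(Q) + 2e`. In a `B_t`-free graph a vertex `a`
of `N(z)` has fewer than `t` heavy partners in `N(z)`, so heavy pairs contribute `O(e)` in total.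
A light pair `Q` with `d(Q) ≥ t` either has `N(Q)` a good `t`-set, and then contributes just `t`,
or lies in one of two families of size `O(e)`: `N(Q)` contains a light pair (and `B_t`-freeness
bounds the 4-cycles with light diagonals through an edge), or `N(Q)` consists of heavy pairs and
is then determined by an edge at `Q`. So `∑ d(z)² ≤ (t - 1) n² + 2 #{good pairs} + O(e)`, and each
good pair `Q` yields `C(t, 2)` copies of `C₄` with the good side `N(Q)`. The same bound and
Cauchy–Schwarz give `e = O(n^{3/2})`, so the `O(e)` error is below `ε n²` for large `n`.
-/

open SimpleGraph

/-- `F` is contained in `G` as a subgraph: there is an injective map preserving adjacency. -/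
def ContainsCopy {α β : Type*} (F : SimpleGraph α) (G : SimpleGraph β) : Prop :=
  ∃ f : α → β, Function.Injective f ∧ ∀ ⦃a b : α⦄, F.Adj a b → G.Adj (f a) (f b)

/-- `Bgraph t = K₂ □ S_t`, the Cartesian product of an edge and a star with `t` edges. -/
def Bgraph (t : ℕ) : SimpleGraph (Fin 2 × (Fin 1 ⊕ Fin t)) :=
  (⊤ : SimpleGraph (Fin 2)).boxProd (completeBipartiteGraph (Fin 1) (Fin t))

/-- The codegree of a set `S`: the number of common neighbors of all vertices of `S`. -/
noncomputable def codeg {V : Type*} (G : SimpleGraph V) (S : Finset V) : ℕ :=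
  {v : V | ∀ u ∈ S, G.Adj u v}.ncard

open Finset

theorem Finset.exists_injective_forall_mem_sdiff {ι α : Type*} [Fintype ι] [DecidableEq α]
    (C : ι → Finset α) (F : Finset α) (h : ∀ i, Fintype.card ι + #F ≤ #(C i)) :
    ∃ f : ι → α, Function.Injective f ∧ ∀ i, f i ∈ C i \ F := by
  refine (all_card_le_biUnion_card_iff_exists_injective _).mp fun s => ?_
  obtain rfl | ⟨i, hi⟩ := s.eq_empty_or_nonempty
  · simp
  calc #s ≤ Fintype.card ι := card_le_univ s
    _ ≤ #(C i \ F) := by have := h i; have := le_card_sdiff F (C i); omega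
    _ ≤ #(s.biUnion fun i => C i \ F) := card_le_card (subset_biUnion_of_mem (fun i => C i \ F) hi)

theorem Finset.exists_fin_injective_forall_mem {α : Type*} {s : Finset α} {t : ℕ} (h : t ≤ #s) :
    ∃ b : Fin t → α, Function.Injective b ∧ ∀ i, b i ∈ s := by
  obtain ⟨f⟩ := Function.Embedding.nonempty_of_card_le (α := Fin t) (β := s) (by simpa using h)
  exact ⟨(↑) ∘ f, Subtype.val_injective.comp f.injective, fun i => (f i).2⟩

theorem Finset.card_le_mul_of_forall_card_filter_le {α : Type*}
    {R : α → α → Prop} [DecidableRel R] (hrefl : ∀ a, R a a) (hsymm : ∀ a b, R a b → R b a)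
    {s : Finset α} {k K : ℕ} (hK : ∀ a ∈ s, #(s.filter (R a)) ≤ K)
    (hk : ∀ M ⊆ s, (M : Set α).Pairwise (fun a b => ¬ R a b) → #M < k) : #s ≤ k * K := by
  classical
  obtain ⟨M, hM, hmax⟩ := exists_max_image
    (s.powerset.filter fun M : Finset α => (M : Set α).Pairwise (fun a b => ¬ R a b)) card
    ⟨∅, by simp⟩
  rw [mem_filter, mem_powerset] at hM
  have hcover : s ⊆ M.biUnion fun m => s.filter (R m) := by
    intro a ha
    by_contra! hout
    simp only [mem_biUnion, mem_filter, not_exists, not_and, ha, true_and] at hout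
    have haM : a ∉ M := fun h => hout a h (hrefl a)
    have := hmax (insert a M) (by
      rw [mem_filter, mem_powerset, coe_insert]
      exact ⟨insert_subset ha hM.1, hM.2.insert fun m hm _ => ⟨fun h => hout m hm (hsymm _ _ h),
        hout m hm⟩⟩)
    rw [card_insert_of_notMem haM] at this
    omega
  calc #s ≤ ∑ m ∈ M, #(s.filter (R m)) := (card_le_card hcover).trans card_biUnion_le
    _ ≤ #M * K := sum_le_card_nsmul _ _ _ fun m hm => hK m (hM.1 hm)
    _ ≤ k * K := Nat.mul_le_mul_right _ (hk M hM.1 hM.2).le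

theorem Nat.two_mul_choose_two_add_self (d : ℕ) : 2 * d.choose 2 + d = d ^ 2 := by
  induction d with
  | zero => rfl
  | succ d ih => rw [Nat.choose_succ_succ, Nat.choose_one_right]; nlinarith

theorem Nat.sq_le_of_sq_le_mul_cube_add {D n T a : ℕ} (h : D ^ 2 ≤ T * n ^ 3 + a * D * n) :
    D ^ 2 ≤ (4 * a ^ 2 + 2 * T) * n ^ 3 := by
  rcases le_or_gt D (2 * a * n) with hD | hD
  · obtain rfl | hn := n.eq_zero_or_pos
    · simpa using h
    have : n ^ 2 ≤ n ^ 3 := Nat.pow_le_pow_right hn (by norm_num)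
    nlinarith [Nat.pow_le_pow_left hD 2]
  · have : 2 * a * n * D ≤ D ^ 2 := by rw [sq]; exact Nat.mul_le_mul_right D hD.le
    have : D ^ 2 ≤ 2 * T * n ^ 3 := by linarith
    exact this.trans (by rw [add_mul]; exact Nat.le_add_left _ _)

namespace BtFree

theorem containsCopy_Bgraph {V : Type*} {G : SimpleGraph V} {t : ℕ} {u r : V} {x y : Fin t → V}
    (hur : G.Adj u r) (hux : ∀ i, G.Adj u (x i)) (hry : ∀ i, G.Adj r (y i))
    (hxy : ∀ i, G.Adj (x i) (y i)) (hx : Function.Injective x) (hy : Function.Injective y)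
    (hxy' : ∀ i j, x i ≠ y j) (hxr : ∀ i, x i ≠ r) (hyu : ∀ i, y i ≠ u) :
    ContainsCopy (Bgraph t) G := by
  have hxu i : x i ≠ u := (hux i).ne'
  have hyr i : y i ≠ r := (hry i).ne'
  refine ⟨fun p => Sum.elim (fun _ => ![u, r] p.1) (fun k => ![x k, y k] p.1) p.2, ?_, ?_⟩
  · rintro ⟨i, p | p⟩ ⟨j, q | q⟩ h <;> fin_cases i <;> fin_cases j <;>
      simp_all [hur.ne, hur.ne.symm, hx.eq_iff, hy.eq_iff, Ne.symm (hxy' _ _), Fin.fin_one_eq_zero]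
  · rintro ⟨i, p | p⟩ ⟨j, q | q⟩ h <;> fin_cases i <;> fin_cases j <;>
      simp_all [Bgraph, boxProd_adj, hur.symm, (hxy _).symm, (hux _).symm, (hry _).symm]

variable {V : Type*} [Fintype V] [DecidableEq V] (G : SimpleGraph V) [DecidableRel G.Adj]

def commonNbrs (A : Finset V) : Finset V := univ.filter fun v => ∀ u ∈ A, G.Adj u v

variable {G}

@[simp] theorem mem_commonNbrs {A : Finset V} {v : V} :
    v ∈ commonNbrs G A ↔ ∀ u ∈ A, G.Adj u v := by
  simp [commonNbrs]

theorem commonNbrs_anti {A B : Finset V} (h : A ⊆ B) : commonNbrs G B ⊆ commonNbrs G A :=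
  fun _ hv => mem_commonNbrs.2 fun u hu => mem_commonNbrs.1 hv u (h hu)

theorem subset_commonNbrs_commonNbrs (A : Finset V) : A ⊆ commonNbrs G (commonNbrs G A) :=
  fun a ha => mem_commonNbrs.2 fun _ hv => (mem_commonNbrs.1 hv a ha).symm

theorem codeg_eq_card_commonNbrs (A : Finset V) : codeg G A = #(commonNbrs G A) := by
  rw [codeg, ← Set.ncard_coe_finset, commonNbrs, coe_filter]; simp

variable (G) in
def heavyPartners (t : ℕ) (z a : V) : Finset V :=
  (G.neighborFinset z).filter fun b => a ≠ b ∧ 2 * t + 1 < #(commonNbrs G {a, b})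

/-- Hall's theorem gives distinct common neighbours `xᵢ ∉ {a, z, b₁, …, b_t}` of `a` and of
heavy partners `bᵢ`; the 4-cycles `a xᵢ bᵢ z` then form a `B_t` on the edge `az`. -/
theorem card_heavyPartners_lt {t : ℕ} (hfree : ¬ ContainsCopy (Bgraph t) G) {z a : V}
    (hza : G.Adj z a) : #(heavyPartners G t z a) < t := by
  by_contra! h
  obtain ⟨b, hb, hbH⟩ := exists_fin_injective_forall_mem h
  simp only [heavyPartners, mem_filter, mem_neighborFinset] at hbH
  set F := insert a (insert z (univ.image b))
  have hF : #F ≤ t + 2 := calc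
    #F ≤ #(univ.image b) + 2 := by grw [card_insert_le, card_insert_le]
    _ ≤ t + 2 := by grw [card_image_le, card_univ, Fintype.card_fin]
  obtain ⟨x, hx, hxC⟩ := exists_injective_forall_mem_sdiff (fun i => commonNbrs G {a, b i}) F
    fun i => by have := (hbH i).2.2; simp only [Fintype.card_fin]; omega
  simp only [mem_sdiff, mem_commonNbrs, forall_eq_or_imp, mem_singleton, forall_eq, F, mem_insert,
    mem_image, mem_univ, true_and, not_or, not_exists] at hxC
  exact hfree (containsCopy_Bgraph hza.symm (fun i => (hxC i).1.1) (fun i => (hbH i).1)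
    (fun i => (hxC i).1.2.symm) hx hb (fun i j => (hxC i).2.2.2 j ∘ Eq.symm)
    (fun i => (hxC i).2.2.1) (fun i => ((hbH i).2.1).symm))

variable (G) in
def lightC4s (t : ℕ) (u r : V) : Finset (V × V) :=
  (G.neighborFinset u ×ˢ G.neighborFinset r).filter fun q => G.Adj q.1 q.2 ∧ q.1 ≠ r ∧ q.2 ≠ u ∧
    #(commonNbrs G {r, q.1}) ≤ 2 * t + 1 ∧ #(commonNbrs G {u, q.2}) ≤ 2 * t + 1

theorem mem_lightC4s {t : ℕ} {u r : V} {q : V × V} : q ∈ lightC4s G t u r ↔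
    G.Adj u q.1 ∧ G.Adj r q.2 ∧ G.Adj q.1 q.2 ∧ q.1 ≠ r ∧ q.2 ≠ u ∧
      #(commonNbrs G {r, q.1}) ≤ 2 * t + 1 ∧ #(commonNbrs G {u, q.2}) ≤ 2 * t + 1 := by
  simp [lightC4s, and_assoc]

theorem card_lightC4s_filter_fst_eq_le {t : ℕ} (u r v : V) :
    #((lightC4s G t u r).filter (·.1 = v)) ≤ 2 * t + 1 := by
  obtain h | ⟨q₀, hq₀⟩ := ((lightC4s G t u r).filter (·.1 = v)).eq_empty_or_nonempty
  · simp [h]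
  obtain ⟨hmem, rfl⟩ := mem_filter.1 hq₀
  obtain ⟨-, -, -, -, -, hlight, -⟩ := mem_lightC4s.1 hmem
  refine (card_le_card_of_injOn Prod.snd (fun q hq => ?_) fun q hq q' hq' h => ?_).trans hlight
  · obtain ⟨hq, hq₁⟩ := mem_filter.1 hq
    obtain ⟨-, hr, hxy, -⟩ := mem_lightC4s.1 hq
    simp [hr, ← hq₁, hxy]
  · exact Prod.ext ((mem_filter.1 hq).2.trans (mem_filter.1 hq').2.symm) h

theorem card_lightC4s_filter_snd_eq_le {t : ℕ} (u r v : V) :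
    #((lightC4s G t u r).filter (·.2 = v)) ≤ 2 * t + 1 := by
  obtain h | ⟨q₀, hq₀⟩ := ((lightC4s G t u r).filter (·.2 = v)).eq_empty_or_nonempty
  · simp [h]
  obtain ⟨hmem, rfl⟩ := mem_filter.1 hq₀
  obtain ⟨-, -, -, -, -, -, hlight⟩ := mem_lightC4s.1 hmem
  refine (card_le_card_of_injOn Prod.fst (fun q hq => ?_) fun q hq q' hq' h => ?_).trans hlight
  · obtain ⟨hq, hq₂⟩ := mem_filter.1 hq
    obtain ⟨hu, -, hxy, -⟩ := mem_lightC4s.1 hq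
    simp [hu, ← hq₂, hxy.symm]
  · exact Prod.ext h ((mem_filter.1 hq).2.trans (mem_filter.1 hq').2.symm)

theorem card_lightC4s_filter_not_disjoint_le {t : ℕ} (u r : V) (q₀ : V × V) :
    #((lightC4s G t u r).filter fun q => ¬ Disjoint ({q₀.1, q₀.2} : Finset V) {q.1, q.2})
      ≤ 4 * (2 * t + 1) := by
  have hsub : (lightC4s G t u r).filter
        (fun q => ¬ Disjoint ({q₀.1, q₀.2} : Finset V) {q.1, q.2}) ⊆
      ({q₀.1, q₀.2} : Finset V).biUnion fun v =>
        (lightC4s G t u r).filter (·.1 = v) ∪ (lightC4s G t u r).filter (·.2 = v) := by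
    intro q hq
    simp only [mem_filter, not_disjoint_iff, mem_insert, mem_singleton] at hq
    obtain ⟨hq, v, hv, hv'⟩ := hq
    simp only [mem_biUnion, mem_union, mem_filter, mem_insert, mem_singleton]
    exact ⟨v, hv, by rcases hv' with rfl | rfl <;> simp [hq]⟩
  calc _ ≤ ∑ v ∈ ({q₀.1, q₀.2} : Finset V), 2 * (2 * t + 1) :=
        (card_le_card hsub).trans <| card_biUnion_le.trans <| sum_le_sum fun v _ =>
          (card_union_le _ _).trans <| by
            grw [card_lightC4s_filter_fst_eq_le, card_lightC4s_filter_snd_eq_le]; omega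
    _ ≤ 4 * (2 * t + 1) := by grw [sum_const, card_le_two]; simp; omega

theorem card_lt_of_subset_lightC4s {t : ℕ} (hfree : ¬ ContainsCopy (Bgraph t) G) {u r : V}
    (hur : G.Adj u r) {M : Finset (V × V)} (hM : M ⊆ lightC4s G t u r)
    (hpw : (M : Set (V × V)).Pairwise fun q q' => Disjoint ({q.1, q.2} : Finset V) {q'.1, q'.2}) :
    #M < t := by
  by_contra! ht
  obtain ⟨b, hb, hbM⟩ := exists_fin_injective_forall_mem ht
  have hq i := mem_lightC4s.1 (hM (hbM i))
  have hdisj {i j} (hij : i ≠ j) : Disjoint {(b i).1, (b i).2} {(b j).1, (b j).2} :=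
    hpw (hbM i) (hbM j) (hb.ne hij)
  refine hfree (containsCopy_Bgraph hur (fun i => (hq i).1) (fun i => (hq i).2.1)
    (fun i => (hq i).2.2.1) (fun i j h => ?_) (fun i j h => ?_) (fun i j h => ?_)
    (fun i => (hq i).2.2.2.1) (fun i => (hq i).2.2.2.2.1))
  · by_contra hij
    exact disjoint_left.1 (hdisj hij) (mem_insert_self _ _) (by simp [h])
  · by_contra hij
    exact disjoint_left.1 (hdisj hij) (mem_insert_of_mem (mem_singleton_self _)) (by simp [h])
  · obtain rfl | hij := eq_or_ne i j
    · exact (hq i).2.2.1.ne h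
    · exact disjoint_left.1 (hdisj hij) (mem_insert_self _ _) (by simp [h])

theorem card_lightC4s_le {t : ℕ} (hfree : ¬ ContainsCopy (Bgraph t) G) {u r : V}
    (hur : G.Adj u r) : #(lightC4s G t u r) ≤ t * (4 * (2 * t + 1)) :=
  card_le_mul_of_forall_card_filter_le
    (R := fun q q' : V × V => ¬ Disjoint ({q.1, q.2} : Finset V) {q'.1, q'.2})
    (fun q => not_disjoint_iff.2 ⟨q.1, by simp, by simp⟩) (fun q q' h => by rwa [disjoint_comm])
    (fun q₀ _ => card_lightC4s_filter_not_disjoint_le u r q₀)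
    fun _ hM hpw => card_lt_of_subset_lightC4s hfree hur hM (hpw.imp fun _ _ => not_not.1)

theorem sum_card_commonNbrs_eq (s : Finset (Finset V)) :
    ∑ Q ∈ s, #(commonNbrs G Q) = ∑ z, #(s.filter (· ⊆ G.neighborFinset z)) := by
  refine .trans (sum_congr rfl fun Q _ => congrArg card ?_)
    (sum_card_bipartiteAbove_eq_sum_card_bipartiteBelow
      (r := fun z Q => Q ⊆ G.neighborFinset z)).symm
  ext z
  simp [bipartiteBelow, subset_iff, adj_comm]

theorem sum_card_commonNbrs_powersetCard_two :
    ∑ Q ∈ powersetCard 2 univ, #(commonNbrs G Q) = ∑ z, (G.degree z).choose 2 := by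
  rw [sum_card_commonNbrs_eq]
  refine sum_congr rfl fun z _ => ?_
  rw [← card_neighborFinset_eq_degree, ← card_powersetCard]
  congr 1
  ext Q
  simp [mem_powersetCard, and_comm]

variable (G) in
def goodPairs (t : ℕ) : Finset (Finset V) :=
  (powersetCard 2 univ).filter fun Q =>
    #(commonNbrs G Q) = t ∧ t < #(commonNbrs G (commonNbrs G Q))

variable (G) in
def heavyPairs (t : ℕ) : Finset (Finset V) :=
  (powersetCard 2 univ).filter fun Q => 2 * t + 1 < #(commonNbrs G Q)

variable (G) in
def lightNbhdPairs (t : ℕ) : Finset (Finset V) :=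
  (powersetCard 2 univ).filter fun Q => #(commonNbrs G Q) ≤ 2 * t + 1 ∧
    ∃ x ∈ commonNbrs G Q, ∃ y ∈ commonNbrs G Q, x ≠ y ∧ #(commonNbrs G {x, y}) ≤ 2 * t + 1

variable (G) in
def heavyNbhdPairs (t : ℕ) : Finset (Finset V) :=
  (powersetCard 2 univ).filter fun Q => #(commonNbrs G Q) = t ∧
    #(commonNbrs G (commonNbrs G Q)) ≤ t ∧
    ∀ x ∈ commonNbrs G Q, ∀ y ∈ commonNbrs G Q, x ≠ y → 2 * t + 1 < #(commonNbrs G {x, y})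

theorem sum_heavyPairs_le {t : ℕ} (hfree : ¬ ContainsCopy (Bgraph t) G) :
    ∑ Q ∈ heavyPairs G t, #(commonNbrs G Q) ≤ t * Fintype.card G.Dart := by
  rw [sum_card_commonNbrs_eq, dart_card_eq_sum_degrees, mul_sum]
  refine sum_le_sum fun z _ => ?_
  calc _ ≤ #((G.neighborFinset z).sigma (heavyPartners G t z)) := by
        refine card_le_card_of_surjOn (fun p => {p.1, p.2}) fun Q hQ => ?_
        simp only [heavyPairs, coe_filter, mem_filter, mem_powersetCard, card_eq_two] at hQ
        obtain ⟨⟨⟨-, a, b, hab, rfl⟩, hheavy⟩, hsub⟩ := hQ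
        simp only [insert_subset_iff, singleton_subset_iff, mem_neighborFinset] at hsub
        exact ⟨⟨a, b⟩, by simp [heavyPartners, hsub, hab, hheavy], rfl⟩
    _ ≤ t * G.degree z := by
        rw [card_sigma, ← card_neighborFinset_eq_degree, mul_comm]
        exact sum_le_card_nsmul _ _ _ fun a ha =>
          (card_heavyPartners_lt hfree ((mem_neighborFinset _ _ _).1 ha)).le

theorem card_lightNbhdPairs_le {t : ℕ} (hfree : ¬ ContainsCopy (Bgraph t) G) :
    #(lightNbhdPairs G t) ≤ Fintype.card G.Dart * (t * (4 * (2 * t + 1))) := by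
  have hsub : lightNbhdPairs G t ⊆ univ.biUnion fun d : G.Dart =>
      (lightC4s G t d.fst d.snd).image fun q => {d.fst, q.2} := by
    intro Q hQ
    simp only [lightNbhdPairs, mem_filter, mem_powersetCard, card_eq_two] at hQ
    obtain ⟨⟨-, a, b, hab, rfl⟩, hcard, x, hx, y, hy, hxy, hlight⟩ := hQ
    simp only [mem_commonNbrs, forall_eq_or_imp, mem_insert, mem_singleton, forall_eq] at hx hy
    simp only [mem_biUnion, mem_univ, true_and, mem_image]
    exact ⟨⟨(a, x), hx.1⟩, (y, b), mem_lightC4s.2 ⟨hy.1, hx.2.symm, hy.2.symm, hxy.symm,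
      hab.symm, hlight, hcard⟩, rfl⟩
  calc _ ≤ _ := (card_le_card hsub).trans card_biUnion_le
    _ ≤ _ := sum_le_card_nsmul _ _ _ fun d _ =>
      card_image_le.trans (card_lightC4s_le hfree d.adj)

theorem erase_subset_heavyPartners {t : ℕ} {Q : Finset V} {a c : V} (ha : a ∈ Q)
    (hc : c ∈ commonNbrs G Q)
    (hheavy : ∀ x ∈ commonNbrs G Q, ∀ y ∈ commonNbrs G Q, x ≠ y →
      2 * t + 1 < #(commonNbrs G {x, y})) :
    (commonNbrs G Q).erase c ⊆ heavyPartners G t a c := by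
  intro x hx
  rw [mem_erase] at hx
  simp only [heavyPartners, mem_filter, mem_neighborFinset]
  exact ⟨mem_commonNbrs.1 hx.2 a ha, Ne.symm hx.1, hheavy c hc x hx.2 (Ne.symm hx.1)⟩

theorem card_commonNbrs_le_of_forall_heavy {t : ℕ} (hfree : ¬ ContainsCopy (Bgraph t) G)
    {Q : Finset V} (hQ : Q.Nonempty)
    (hheavy : ∀ x ∈ commonNbrs G Q, ∀ y ∈ commonNbrs G Q, x ≠ y →
      2 * t + 1 < #(commonNbrs G {x, y})) :
    #(commonNbrs G Q) ≤ t := by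
  obtain hN | ⟨c, hc⟩ := (commonNbrs G Q).eq_empty_or_nonempty
  · simp [hN]
  obtain ⟨a, ha⟩ := hQ
  have h1 := card_le_card (erase_subset_heavyPartners ha hc hheavy)
  have h2 := card_heavyPartners_lt hfree (mem_commonNbrs.1 hc a ha)
  rw [card_erase_of_mem hc] at h1
  omega

/-- For `Q = {a, b}` and `c ∈ N(Q)`, the set `N(Q) = {c} ∪ heavyPartners G t a c` is determined
by the dart `(a, c)`, and `b` lies in `N(N(Q))`, which has at most `t` elements. -/
theorem card_heavyNbhdPairs_le {t : ℕ} (hfree : ¬ ContainsCopy (Bgraph t) G) :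
    #(heavyNbhdPairs G t) ≤ Fintype.card G.Dart * t := by
  let W (d : G.Dart) := insert d.snd (heavyPartners G t d.fst d.snd)
  have hsub : heavyNbhdPairs G t ⊆ (univ.filter fun d => #(commonNbrs G (W d)) ≤ t).biUnion
      fun d => (commonNbrs G (W d)).image fun b => {d.fst, b} := by
    intro Q hQ
    simp only [heavyNbhdPairs, mem_filter, mem_powersetCard] at hQ
    obtain ⟨⟨-, hQ2⟩, hcard, hcard', hheavy⟩ := hQ
    obtain ⟨a, b, -, rfl⟩ := card_eq_two.1 hQ2
    have ht : 2 ≤ t := hQ2 ▸ (card_le_card (subset_commonNbrs_commonNbrs _)).trans hcard'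
    obtain ⟨c, hc⟩ : (commonNbrs G {a, b}).Nonempty := card_pos.1 (by omega)
    have hac : G.Adj a c := mem_commonNbrs.1 hc a (mem_insert_self a _)
    have hsub := erase_subset_heavyPartners (mem_insert_self a {b}) hc hheavy
    have hW : commonNbrs G {a, b} = W ⟨(a, c), hac⟩ := by
      rw [← insert_erase hc, eq_of_subset_of_card_le hsub]
      rw [card_erase_of_mem hc]
      have := card_heavyPartners_lt hfree hac
      omega
    simp only [mem_biUnion, mem_filter, mem_univ, true_and, mem_image]
    refine ⟨_, hW ▸ hcard', b, hW ▸ subset_commonNbrs_commonNbrs _ (by simp), rfl⟩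
  calc _ ≤ _ := (card_le_card hsub).trans card_biUnion_le
    _ ≤ #(univ.filter fun d => #(commonNbrs G (W d)) ≤ t) * t :=
      sum_le_card_nsmul _ _ _ fun d hd => card_image_le.trans (mem_filter.1 hd).2
    _ ≤ _ := Nat.mul_le_mul_right _ (card_filter_le _ _)

theorem card_commonNbrs_le_ite {t : ℕ} (hfree : ¬ ContainsCopy (Bgraph t) G)
    {Q : Finset V} (hQ : Q ∈ powersetCard 2 univ) :
    #(commonNbrs G Q) ≤ (t - 1) + (if Q ∈ goodPairs G t then 1 else 0)
      + (if Q ∈ heavyPairs G t then #(commonNbrs G Q) else 0)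
      + (t + 2) * ((if Q ∈ lightNbhdPairs G t then 1 else 0)
        + (if Q ∈ heavyNbhdPairs G t then 1 else 0)) := by
  have hne : Q.Nonempty := card_pos.1 (by rw [(mem_powersetCard.1 hQ).2]; omega)
  simp only [goodPairs, heavyPairs, lightNbhdPairs, heavyNbhdPairs, mem_filter, hQ, true_and]
  by_cases hlight : ∃ x ∈ commonNbrs G Q, ∃ y ∈ commonNbrs G Q, x ≠ y ∧
      #(commonNbrs G {x, y}) ≤ 2 * t + 1
  · simp only [hlight, and_true]
    split_ifs <;> omega
  · push Not at hlight
    have := card_commonNbrs_le_of_forall_heavy hfree hne hlight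
    simp only [eq_true hlight, and_true]
    split_ifs <;> omega

/-- Per dart: `t` from heavy pairs, and weight `t + 2` on at most `t * (4 * (2 * t + 1))` pairs of
`lightNbhdPairs` and `t` pairs of `heavyNbhdPairs`. -/
def dartCoeff (t : ℕ) : ℕ := t + (t + 2) * (t * (4 * (2 * t + 1)) + t)

theorem sum_card_commonNbrs_le {t : ℕ} (hfree : ¬ ContainsCopy (Bgraph t) G) :
    ∑ Q ∈ powersetCard 2 univ, #(commonNbrs G Q) ≤ (t - 1) * (Fintype.card V).choose 2
      + #(goodPairs G t) + dartCoeff t * Fintype.card G.Dart := by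
  have hmem (s : Finset (Finset V)) (hs : s ⊆ powersetCard 2 univ) (f : Finset V → ℕ) :
      ∑ Q ∈ powersetCard 2 univ, (if Q ∈ s then f Q else 0) = ∑ Q ∈ s, f Q := by
    rw [sum_ite_mem, inter_eq_right.2 hs]
  calc _ ≤ _ := sum_le_sum fun Q hQ => card_commonNbrs_le_ite hfree hQ
    _ = (t - 1) * (Fintype.card V).choose 2 + #(goodPairs G t)
        + ∑ Q ∈ heavyPairs G t, #(commonNbrs G Q)
        + (t + 2) * (#(lightNbhdPairs G t) + #(heavyNbhdPairs G t)) := by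
      simp only [sum_add_distrib, ← mul_sum, sum_const, card_powersetCard, card_univ, smul_eq_mul,
        hmem (goodPairs G t) (filter_subset _ _), hmem (heavyPairs G t) (filter_subset _ _),
        hmem (lightNbhdPairs G t) (filter_subset _ _),
        hmem (heavyNbhdPairs G t) (filter_subset _ _), mul_one]
      ring
    _ ≤ _ := by
      grw [sum_heavyPairs_le hfree, card_lightNbhdPairs_le hfree, card_heavyNbhdPairs_le hfree]
      rw [dartCoeff]
      apply le_of_eq; ring

theorem sum_degree_sq_le {t : ℕ} (hfree : ¬ ContainsCopy (Bgraph t) G) :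
    ∑ z, G.degree z ^ 2 ≤ (t - 1) * Fintype.card V ^ 2 + 2 * #(goodPairs G t)
      + (2 * dartCoeff t + 1) * Fintype.card G.Dart := by
  have hsq : ∑ z, G.degree z ^ 2
      = 2 * ∑ Q ∈ powersetCard 2 univ, #(commonNbrs G Q) + Fintype.card G.Dart := by
    simp only [sum_card_commonNbrs_powersetCard_two, dart_card_eq_sum_degrees, mul_sum,
      ← sum_add_distrib, Nat.two_mul_choose_two_add_self]
  have hn : (t - 1) * (2 * (Fintype.card V).choose 2) ≤ (t - 1) * Fintype.card V ^ 2 :=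
    Nat.mul_le_mul_left _ (by have := Nat.two_mul_choose_two_add_self (Fintype.card V); omega)
  have := sum_card_commonNbrs_le hfree
  nlinarith

variable (G) in
/-- The set counted by `N(C₄, G)`: a copy `u₁ v₁ u₂ v₂` is recorded by its pair of diagonals. -/
def goodC4s (t : ℕ) : Set (Sym2 (Finset V)) :=
  {p | ∃ A B : Finset V, p = s(A, B) ∧ A.card = 2 ∧ B.card = 2 ∧ Disjoint A B ∧
    (∀ u ∈ A, ∀ v ∈ B, G.Adj u v) ∧
    ∃ S : Finset V, S.card = t ∧ S.card + 1 ≤ codeg G S ∧ (A ⊆ S ∨ B ⊆ S)}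

/-- Each good pair `Q` spans a copy of `C₄` with every pair `R` inside the good `t`-set `N(Q)`.
These copies are distinct, since such an `R` has `d(R) ≥ d(N(Q)) > t` and so is not good. -/
theorem choose_two_mul_card_goodPairs_le (t : ℕ) :
    t.choose 2 * #(goodPairs G t) ≤ (goodC4s G t).ncard := by
  have hgood {Q} (hQ : Q ∈ goodPairs G t) :
      #Q = 2 ∧ #(commonNbrs G Q) = t ∧ t < #(commonNbrs G (commonNbrs G Q)) := by
    simp only [goodPairs, mem_filter, mem_powersetCard] at hQ
    exact ⟨hQ.1.2, hQ.2⟩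
  let src := (goodPairs G t).sigma fun Q => powersetCard 2 (commonNbrs G Q)
  have hsrc : #src = t.choose 2 * #(goodPairs G t) := by
    rw [card_sigma, mul_comm]
    exact sum_const_nat fun Q hQ => by rw [card_powersetCard, (hgood hQ).2.1]
  rw [← hsrc, ← Set.ncard_coe_finset]
  refine Set.ncard_le_ncard_of_injOn (fun x => s(x.2, x.1)) (fun x hx => ?_) (fun x hx y hy h => ?_)
    (Set.toFinite _)
  · simp only [src, coe_sigma, Set.mem_sigma_iff, mem_coe, mem_powersetCard] at hx
    obtain ⟨hQ, hRQ, hR⟩ := hx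
    obtain ⟨hQ2, hQt, hQgood⟩ := hgood hQ
    refine ⟨x.2, x.1, rfl, hR, hQ2, disjoint_left.2 fun a haR haQ =>
      G.irrefl (mem_commonNbrs.1 (hRQ haR) a haQ), fun u hu v hv =>
      (mem_commonNbrs.1 (hRQ hu) v hv).symm, commonNbrs G x.1, hQt, ?_, Or.inl hRQ⟩
    rw [codeg_eq_card_commonNbrs]
    omega
  · simp only [src, coe_sigma, Set.mem_sigma_iff, mem_coe, mem_powersetCard] at hx hy
    rcases Sym2.eq_iff.1 h with ⟨h2, h1⟩ | ⟨h2, h1⟩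
    · exact Sigma.ext h1 (heq_of_eq h2)
    · have h := card_le_card (commonNbrs_anti (G := G) (h2 ▸ hx.2.1 : y.1 ⊆ commonNbrs G x.1))
      have := (hgood hx.1).2.2
      have := (hgood hy.1).2.1
      omega

theorem sq_card_dart_le {t : ℕ} (hfree : ¬ ContainsCopy (Bgraph t) G) :
    Fintype.card G.Dart ^ 2
      ≤ (4 * (2 * dartCoeff t + 1) ^ 2 + 2 * (t + 1)) * Fintype.card V ^ 3 := by
  have hCS : Fintype.card G.Dart ^ 2 ≤ Fintype.card V * ∑ z, G.degree z ^ 2 := by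
    simpa [dart_card_eq_sum_degrees] using
      sq_sum_le_card_mul_sum_sq (s := univ) (f := fun z => G.degree z)
  have hgood : 2 * #(goodPairs G t) ≤ Fintype.card V ^ 2 := by
    have := Nat.two_mul_choose_two_add_self (Fintype.card V)
    have := card_filter_le (powersetCard 2 (univ : Finset V)) fun Q =>
      #(commonNbrs G Q) = t ∧ t < #(commonNbrs G (commonNbrs G Q))
    rw [card_powersetCard, card_univ] at this
    rw [goodPairs]
    omega
  have hdeg := sum_degree_sq_le hfree
  have ht : (t - 1) * Fintype.card V ^ 2 ≤ t * Fintype.card V ^ 2 :=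
    Nat.mul_le_mul_right _ (Nat.sub_le t 1)
  refine Nat.sq_le_of_sq_le_mul_cube_add (hCS.trans ?_)
  calc _ ≤ Fintype.card V
        * ((t + 1) * Fintype.card V ^ 2 + (2 * dartCoeff t + 1) * Fintype.card G.Dart) :=
        Nat.mul_le_mul_left _ (by linarith)
    _ = _ := by ring

theorem exists_mul_ncard_edgeSet_le (t B : ℕ) {ε : ℝ} (hε : 0 < ε) :
    ∃ N : ℕ, ∀ n ≥ N, ∀ G : SimpleGraph (Fin n), ¬ ContainsCopy (Bgraph t) G →
      (B : ℝ) * G.edgeSet.ncard ≤ ε * n ^ 2 := by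
  set K : ℕ := 4 * (2 * dartCoeff t + 1) ^ 2 + 2 * (t + 1)
  refine ⟨⌈(B : ℝ) ^ 2 * K / ε ^ 2⌉₊, fun n hn G hfree => ?_⟩
  classical
  have hD := sq_card_dart_le hfree
  rw [dart_card_eq_twice_card_edges, Fintype.card_fin] at hD
  rw [← coe_edgeFinset, Set.ncard_coe_finset]
  have hn : (B : ℝ) ^ 2 * K ≤ ε ^ 2 * n := by
    rw [← div_le_iff₀' (by positivity)]
    exact (Nat.le_ceil _).trans (by exact_mod_cast hn)
  have hDR : ((2 * #G.edgeFinset : ℕ) : ℝ) ^ 2 ≤ (K : ℝ) * n ^ 3 := by exact_mod_cast hD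
  push_cast at hDR
  refine (pow_le_pow_iff_left₀ (by positivity) (by positivity) two_ne_zero).1 ?_
  nlinarith [sq_nonneg (B : ℝ), pow_nonneg (Nat.cast_nonneg n : (0 : ℝ) ≤ n) 3]

end BtFree

open BtFree

theorem NC4_lower (t : ℕ) (ht : 1 ≤ t) (ε : ℝ) (hε : 0 < ε) :
    ∃ N : ℕ, ∀ n : ℕ, N ≤ n → ∀ G : SimpleGraph (Fin n),
      ¬ ContainsCopy (Bgraph t) G →
      (1 / 2 : ℝ) * (t.choose 2 : ℝ) *
          ((∑ u : Fin n, ((G.neighborSet u).ncard : ℝ) ^ 2)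
            - 2 * (4 * (t : ℝ) - 1) * (G.edgeSet.ncard : ℝ) - ((t : ℝ) - 1) * (n : ℝ) ^ 2)
        ≤ ({p : Sym2 (Finset (Fin n)) |
              ∃ A B : Finset (Fin n), p = s(A, B) ∧ A.card = 2 ∧ B.card = 2 ∧
                Disjoint A B ∧ (∀ u ∈ A, ∀ v ∈ B, G.Adj u v) ∧
                ∃ S : Finset (Fin n), S.card = t ∧ S.card + 1 ≤ codeg G S ∧
                  (A ⊆ S ∨ B ⊆ S)}.ncard : ℝ) + ε * (n : ℝ) ^ 2 := by
  classical
  obtain ⟨N, hN⟩ := exists_mul_ncard_edgeSet_le t (t.choose 2 * (2 * dartCoeff t + 1)) hε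
  refine ⟨N, fun n hn G hfree => ?_⟩
  have hedge := hN n hn G hfree
  have hdeg := sum_degree_sq_le hfree
  rw [dart_card_eq_twice_card_edges, Fintype.card_fin] at hdeg
  have hdegR : ((∑ z, G.degree z ^ 2 : ℕ) : ℝ) ≤ ((t : ℝ) - 1) * n ^ 2 + 2 * #(goodPairs G t)
      + (2 * dartCoeff t + 1) * (2 * #G.edgeFinset) := by
    rw [← Nat.cast_one, ← Nat.cast_sub ht]; exact_mod_cast hdeg
  have hfund : (t.choose 2 : ℝ) * #(goodPairs G t) ≤ (goodC4s G t).ncard := by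
    exact_mod_cast choose_two_mul_card_goodPairs_le t
  have hnbr (u : Fin n) : (G.neighborSet u).ncard = G.degree u := by
    rw [← card_neighborFinset_eq_degree, neighborFinset_def, Set.ncard_eq_toFinset_card']
  have h4t : (0 : ℝ) ≤ 4 * t - 1 := by linarith [(Nat.one_le_cast (α := ℝ)).2 ht]
  rw [← coe_edgeFinset, Set.ncard_coe_finset] at hedge ⊢
  simp only [hnbr]
  change _ ≤ ((goodC4s G t).ncard : ℝ) + _
  push_cast at hdegR hedge
  nlinarith [mul_le_mul_of_nonneg_left hdegR (Nat.cast_nonneg (t.choose 2) : (0 : ℝ) ≤ _),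
    mul_nonneg (mul_nonneg (Nat.cast_nonneg (t.choose 2) : (0 : ℝ) ≤ _) h4t)
      (Nat.cast_nonneg #G.edgeFinset : (0 : ℝ) ≤ _)]
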